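/- Let V_N(x,y) be defined recursively by V_0(x,y) = y v_0(x) with v_0 ≥ 0, and V_{N+1}(x,y) = min over a ∈ A(x) of max over b ∈ B(x,y,a) of Σ_{x'} (y b_{x'} c(x,a,x') + β V_N(x', y b_{x'})) p(x'|x,a), where costs c are nonnegative and B(x,y,a) is as in the CVaR uncertainty set. Then for every N and every x, the function y ↦ V_N(x,y) is continuous, concave, nondecreasing, and piecewise linear on [0,1]. -/

import Mathlib

open Set

/-- `f : [0,1] → ℝ` is piecewise linear: there is a finite partition
`0 = u₀ < u₁ < … < u_n = 1` such that `f` is affine on each `[u_{i-1}, u_i]`. -/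
def IsPiecewiseLinearOn01 (f : ℝ → ℝ) : Prop :=
  ∃ n : ℕ, 0 < n ∧ ∃ u : ℕ → ℝ, u 0 = 0 ∧ u n = 1 ∧ (∀ i < n, u i < u (i + 1)) ∧
    ∀ i < n, ∃ c d : ℝ, ∀ t ∈ Set.Icc (u i) (u (i + 1)), f t = c * t + d

/-!
Every `V N x` agrees on `[0,1]` with the minimum of finitely many lines of nonnegative slope, and
this class is stable under the Bellman step. The substitution `z = y • b` turns the inner
maximisation into `max {Σᵢ gᵢ(zᵢ) pᵢ | z ∈ [0,1]^X, Σᵢ zᵢ pᵢ = y}` with every `gᵢ` again such an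
envelope, and Lagrangian duality rewrites it as `min_μ (μ y + Σᵢ gᵢ*(μ) pᵢ)`, with `μ` ranging over
the finitely many slopes of the `gᵢ`. Strong duality holds because for consecutive slopes
`μ₀ < μ₁` the largest maximiser of `gᵢ(z) - μ₁ z` on `[0,1]` also maximises `gᵢ(z) - μ₀ z`, so the
intervals of aggregated maximisers `Σᵢ zᵢ pᵢ` cover `[0,1]` as `μ` runs through the slopes.
-/

noncomputable def minAffine (F : Finset (ℝ × ℝ)) (hF : F.Nonempty) (t : ℝ) : ℝ :=
  F.inf' hF fun q => q.1 * t + q.2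

section minAffine

variable {F : Finset (ℝ × ℝ)} (hF : F.Nonempty)

lemma minAffine_le {q : ℝ × ℝ} (hq : q ∈ F) (t : ℝ) : minAffine F hF t ≤ q.1 * t + q.2 :=
  Finset.inf'_le _ hq

lemma exists_minAffine_eq (t : ℝ) : ∃ q ∈ F, minAffine F hF t = q.1 * t + q.2 :=
  Finset.exists_mem_eq_inf' hF _

lemma continuous_minAffine : Continuous (minAffine F hF) :=
  Continuous.finset_inf'_apply hF fun _ _ => by fun_prop

lemma concaveOn_minAffine : ConcaveOn ℝ univ (minAffine F hF) := by
  refine ⟨convex_univ, fun s _ t _ a b ha hb hab => Finset.le_inf' hF _ fun q hq => ?_⟩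
  calc a • minAffine F hF s + b • minAffine F hF t
      ≤ a * (q.1 * s + q.2) + b * (q.1 * t + q.2) := by
        simp only [smul_eq_mul]
        gcongr <;> exact minAffine_le hF hq _
    _ = q.1 * (a • s + b • t) + q.2 := by
        simp only [smul_eq_mul]; linear_combination q.2 * hab

lemma monotone_minAffine_sub {μ : ℝ} (h : ∀ q ∈ F, μ ≤ q.1) :
    Monotone fun t => minAffine F hF t - μ * t := by
  intro s t hst
  obtain ⟨q, hq, hqt⟩ := exists_minAffine_eq hF t
  have := minAffine_le hF hq s
  nlinarith [h q hq]

lemma antitone_minAffine_sub {μ : ℝ} (h : ∀ q ∈ F, q.1 ≤ μ) :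
    Antitone fun t => minAffine F hF t - μ * t := by
  intro s t hst
  obtain ⟨q, hq, hqs⟩ := exists_minAffine_eq hF s
  have := minAffine_le hF hq t
  nlinarith [h q hq]

end minAffine

/-- `(b - b') / (a' - a)` is where the lines `(a, b)` and `(a', b')` cross (junk `0` when they are
parallel); between two consecutive crossing points `minAffine F` is a single line. -/
noncomputable def crossingPoints (F : Finset (ℝ × ℝ)) : Finset ℝ :=
  insert 0 <| insert 1 <| ((F ×ˢ F).image fun qq => (qq.1.2 - qq.2.2) / (qq.2.1 - qq.1.1)).filter
    (· ∈ Icc 0 1)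

section crossingPoints

variable {F : Finset (ℝ × ℝ)}

lemma zero_mem_crossingPoints : (0 : ℝ) ∈ crossingPoints F := by simp [crossingPoints]

lemma one_mem_crossingPoints : (1 : ℝ) ∈ crossingPoints F := by simp [crossingPoints]

lemma crossingPoints_nonempty : (crossingPoints F).Nonempty := ⟨0, zero_mem_crossingPoints⟩

lemma mem_Icc_of_mem_crossingPoints {s : ℝ} (hs : s ∈ crossingPoints F) : s ∈ Icc 0 1 := by
  simp only [crossingPoints, Finset.mem_insert, Finset.mem_filter] at hs
  rcases hs with rfl | rfl | ⟨-, hs⟩ <;> simp_all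

lemma mem_crossingPoints_of_eq {q q' : ℝ × ℝ} (hq : q ∈ F) (hq' : q' ∈ F) (hne : q.1 ≠ q'.1)
    {s : ℝ} (hs : s ∈ Icc 0 1) (heq : q.1 * s + q.2 = q'.1 * s + q'.2) : s ∈ crossingPoints F := by
  have hs_eq : (q.2 - q'.2) / (q'.1 - q.1) = s := by
    rw [div_eq_iff (sub_ne_zero.mpr hne.symm)]; linarith
  simp only [crossingPoints, Finset.mem_insert, Finset.mem_filter, Finset.mem_image,
    Finset.mem_product]
  exact Or.inr <| Or.inr ⟨⟨(q, q'), ⟨hq, hq'⟩, hs_eq⟩, hs⟩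

variable (hF : F.Nonempty)

/-- The line realising the envelope at the midpoint cannot be undercut anywhere on `[u, v]`:
an undercutting line would cross it strictly inside `(u, v)`. -/
lemma exists_minAffine_eq_on_Icc {u v : ℝ} (hu : 0 ≤ u) (hv : v ≤ 1)
    (hgap : ∀ s ∈ crossingPoints F, s ∉ Ioo u v) :
    ∃ q ∈ F, ∀ t ∈ Icc u v, minAffine F hF t = q.1 * t + q.2 := by
  obtain ⟨q, hq, hqm⟩ := exists_minAffine_eq hF ((u + v) / 2)
  refine ⟨q, hq, fun t ht => le_antisymm (minAffine_le hF hq t) ?_⟩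
  refine Finset.le_inf' hF _ fun q' hq' => ?_
  by_contra hlt
  have hm := minAffine_le hF hq' ((u + v) / 2)
  have hne : q.1 ≠ q'.1 := fun h => by rw [h] at hlt hqm; linarith
  set s := (q.2 - q'.2) / (q'.1 - q.1)
  have hs : q.1 * s + q.2 = q'.1 * s + q'.2 := by
    simp only [s]; field_simp [sub_ne_zero.mpr hne.symm]; ring
  have hsuv : s ∈ Ioo u v := by
    rcases lt_or_gt_of_ne hne with h | h <;>
    · constructor <;> nlinarith [ht.1, ht.2]
  exact hgap s (mem_crossingPoints_of_eq hq hq' hne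
    ⟨hu.trans hsuv.1.le, hsuv.2.le.trans hv⟩ hs) hsuv

lemma exists_crossingPoints_bracket {t : ℝ} (ht : t ∈ Icc 0 1) :
    ∃ u ∈ crossingPoints F, ∃ v ∈ crossingPoints F, t ∈ Icc u v ∧
      ∃ q ∈ F, ∀ s ∈ Icc u v, minAffine F hF s = q.1 * s + q.2 := by
  have hbelow : ((crossingPoints F).filter (· ≤ t)).Nonempty :=
    ⟨0, Finset.mem_filter.mpr ⟨zero_mem_crossingPoints, ht.1⟩⟩
  have habove : ((crossingPoints F).filter (t ≤ ·)).Nonempty :=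
    ⟨1, Finset.mem_filter.mpr ⟨one_mem_crossingPoints, ht.2⟩⟩
  obtain ⟨hu, hut⟩ := Finset.mem_filter.mp (Finset.max'_mem _ hbelow)
  obtain ⟨hv, htv⟩ := Finset.mem_filter.mp (Finset.min'_mem _ habove)
  refine ⟨_, hu, _, hv, ⟨hut, htv⟩, exists_minAffine_eq_on_Icc hF
    (mem_Icc_of_mem_crossingPoints hu).1 (mem_Icc_of_mem_crossingPoints hv).2 ?_⟩
  intro s hs ⟨hus, hsv⟩
  rcases le_total s t with hst | hts
  · exact hus.not_ge (Finset.le_max' _ s (Finset.mem_filter.mpr ⟨hs, hst⟩))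
  · exact hsv.not_ge (Finset.min'_le _ s (Finset.mem_filter.mpr ⟨hs, hts⟩))

end crossingPoints

lemma isPiecewiseLinearOn01_of_finset {f : ℝ → ℝ} (s : Finset ℝ) (h0 : 0 ∈ s) (h1 : 1 ∈ s)
    (hs : ∀ u ∈ s, u ∈ Icc 0 1)
    (hf : ∀ u ∈ s, ∀ v ∈ s, u < v → (∀ w ∈ s, w ∉ Ioo u v) →
      ∃ c d : ℝ, ∀ t ∈ Icc u v, f t = c * t + d) :
    IsPiecewiseLinearOn01 f := by
  obtain ⟨n, hn⟩ : ∃ n, s.card = n + 1 := Nat.exists_eq_add_one.mpr (Finset.card_pos.mpr ⟨0, h0⟩)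
  have hn0 : 0 < n := by
    have : 1 < s.card := Finset.one_lt_card.mpr ⟨0, h0, 1, h1, zero_ne_one⟩
    omega
  set e := s.orderEmbOfFin hn
  have he0 : e 0 = 0 := by
    rw [Fin.zero_eta.symm, Finset.orderEmbOfFin_zero hn n.succ_pos]
    exact le_antisymm (Finset.min'_le _ _ h0) (Finset.le_min' _ _ _ fun u hu => (hs u hu).1)
  have hen : e (Fin.last n) = 1 := by
    have hlast := Finset.orderEmbOfFin_last hn n.succ_pos
    simp only [Nat.add_sub_cancel] at hlast
    rw [Fin.last, hlast]
    exact le_antisymm (Finset.max'_le _ _ _ fun u hu => (hs u hu).2) (Finset.le_max' _ _ h1)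
  let u : ℕ → ℝ := fun i => e ⟨min i n, by omega⟩
  have hu : ∀ i (hi : i ≤ n), u i = e ⟨i, by omega⟩ := fun i hi => by simp [u, min_eq_left hi]
  refine ⟨n, hn0, u, by rw [hu 0 n.zero_le]; exact he0, by rw [hu n le_rfl]; exact hen,
    fun i hi => ?_, fun i hi => ?_⟩
  · rw [hu i hi.le, hu (i + 1) hi]
    exact e.strictMono (Fin.mk_lt_mk.mpr i.lt_succ_self)
  · rw [hu i hi.le, hu (i + 1) hi]
    refine hf _ (s.orderEmbOfFin_mem hn _) _ (s.orderEmbOfFin_mem hn _)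
      (e.strictMono (Fin.mk_lt_mk.mpr i.lt_succ_self)) fun w hw ⟨hlo, hhi⟩ => ?_
    obtain ⟨j, rfl⟩ : w ∈ Set.range e := by rw [Finset.range_orderEmbOfFin]; exact hw
    have := e.lt_iff_lt.mp hlo
    have := e.lt_iff_lt.mp hhi
    simp only [Fin.lt_def] at *
    omega

lemma isPiecewiseLinearOn01_of_eq_minAffine {F : Finset (ℝ × ℝ)} (hF : F.Nonempty) {f : ℝ → ℝ}
    (hf : ∀ t ∈ Icc 0 1, f t = minAffine F hF t) : IsPiecewiseLinearOn01 f := by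
  refine isPiecewiseLinearOn01_of_finset (crossingPoints F) zero_mem_crossingPoints
    one_mem_crossingPoints (fun _ => mem_Icc_of_mem_crossingPoints) fun u hu v hv _ hgap => ?_
  have hu01 := mem_Icc_of_mem_crossingPoints hu
  have hv01 := mem_Icc_of_mem_crossingPoints hv
  obtain ⟨q, -, hq⟩ := exists_minAffine_eq_on_Icc hF hu01.1 hv01.2 hgap
  exact ⟨q.1, q.2, fun t ht => (hf t ⟨hu01.1.trans ht.1, ht.2.trans hv01.2⟩).trans (hq t ht)⟩

/-- `max_{t ∈ [0,1]} (minAffine F t - μ * t)`; the maximum is attained at a crossing point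
(`sub_le_concaveConj`). -/
noncomputable def concaveConj (F : Finset (ℝ × ℝ)) (hF : F.Nonempty) (μ : ℝ) : ℝ :=
  (crossingPoints F).sup' crossingPoints_nonempty fun s => minAffine F hF s - μ * s

noncomputable def argmaxSet (F : Finset (ℝ × ℝ)) (hF : F.Nonempty) (μ : ℝ) : Finset ℝ :=
  (crossingPoints F).filter fun s => minAffine F hF s - μ * s = concaveConj F hF μ

lemma argmaxSet_nonempty (F : Finset (ℝ × ℝ)) (hF : F.Nonempty) (μ : ℝ) :
    (argmaxSet F hF μ).Nonempty := by
  obtain ⟨s, hs, hse⟩ := Finset.exists_mem_eq_sup' crossingPoints_nonempty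
    fun s => minAffine F hF s - μ * s
  exact ⟨s, Finset.mem_filter.mpr ⟨hs, hse.symm⟩⟩

noncomputable def argmaxLow (F : Finset (ℝ × ℝ)) (hF : F.Nonempty) (μ : ℝ) : ℝ :=
  (argmaxSet F hF μ).min' (argmaxSet_nonempty F hF μ)

noncomputable def argmaxHigh (F : Finset (ℝ × ℝ)) (hF : F.Nonempty) (μ : ℝ) : ℝ :=
  (argmaxSet F hF μ).max' (argmaxSet_nonempty F hF μ)

section concaveConj

variable {F : Finset (ℝ × ℝ)} (hF : F.Nonempty) {μ : ℝ}

lemma le_concaveConj {s : ℝ} (hs : s ∈ crossingPoints F) :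
    minAffine F hF s - μ * s ≤ concaveConj F hF μ :=
  Finset.le_sup' (fun s => minAffine F hF s - μ * s) hs

/-- On a bracket `[u, v]` the envelope is a line, so `minAffine F t - μ * t` is bounded by its
value at `u` or at `v` according to the sign of the slope. -/
lemma sub_le_concaveConj {t : ℝ} (ht : t ∈ Icc 0 1) :
    minAffine F hF t - μ * t ≤ concaveConj F hF μ := by
  obtain ⟨u, hu, v, hv, ⟨hut, htv⟩, q, -, hq⟩ := exists_crossingPoints_bracket hF ht
  have hu' := le_concaveConj hF (μ := μ) hu
  have hv' := le_concaveConj hF (μ := μ) hv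
  rw [hq t ⟨hut, htv⟩]
  rw [hq u ⟨le_rfl, hut.trans htv⟩] at hu'
  rw [hq v ⟨hut.trans htv, le_rfl⟩] at hv'
  rcases le_total μ q.1 with h | h <;> nlinarith

lemma mem_argmaxSet {s : ℝ} (hs : s ∈ crossingPoints F)
    (hmax : concaveConj F hF μ ≤ minAffine F hF s - μ * s) : s ∈ argmaxSet F hF μ :=
  Finset.mem_filter.mpr ⟨hs, le_antisymm (le_concaveConj hF hs) hmax⟩

lemma argmaxLow_mem : argmaxLow F hF μ ∈ argmaxSet F hF μ := Finset.min'_mem _ _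

lemma argmaxHigh_mem : argmaxHigh F hF μ ∈ argmaxSet F hF μ := Finset.max'_mem _ _

lemma argmaxHigh_eq_one (h : ∀ q ∈ F, μ ≤ q.1) : argmaxHigh F hF μ = 1 := by
  have hmono := monotone_minAffine_sub hF h
  have h1 : (1 : ℝ) ∈ argmaxSet F hF μ := mem_argmaxSet hF one_mem_crossingPoints <|
    Finset.sup'_le _ _ fun s hs => hmono (mem_Icc_of_mem_crossingPoints hs).2
  exact le_antisymm (mem_Icc_of_mem_crossingPoints (Finset.mem_filter.mp (argmaxHigh_mem hF)).1).2
    (Finset.le_max' _ _ h1)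

lemma argmaxLow_eq_zero (h : ∀ q ∈ F, q.1 ≤ μ) : argmaxLow F hF μ = 0 := by
  have hanti := antitone_minAffine_sub hF h
  have h0 : (0 : ℝ) ∈ argmaxSet F hF μ := mem_argmaxSet hF zero_mem_crossingPoints <|
    Finset.sup'_le _ _ fun s hs => hanti (mem_Icc_of_mem_crossingPoints hs).1
  exact le_antisymm (Finset.min'_le _ _ h0)
    (mem_Icc_of_mem_crossingPoints (Finset.mem_filter.mp (argmaxLow_mem hF)).1).1

/-- If no slope of `F` lies strictly between `μ₀ < μ₁`, the largest maximiser `z` for `μ₁` is a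
maximiser for `μ₀`: right of `z` the envelope follows a line of slope `< μ₁`, hence `≤ μ₀`. -/
lemma argmaxLow_le_argmaxHigh {μ₀ μ₁ : ℝ} (hμ : μ₀ ≤ μ₁) (hgap : ∀ q ∈ F, q.1 ∉ Ioo μ₀ μ₁) :
    argmaxLow F hF μ₀ ≤ argmaxHigh F hF μ₁ := by
  set z := argmaxHigh F hF μ₁
  obtain ⟨hz, hzmax⟩ := Finset.mem_filter.mp (argmaxHigh_mem hF (μ := μ₁))
  refine Finset.min'_le _ _ (mem_argmaxSet hF hz (Finset.sup'_le _ _ fun s hs => ?_))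
  rcases le_or_gt s z with hsz | hzs
  · have := le_concaveConj hF (μ := μ₁) hs
    nlinarith
  · have habove : ((crossingPoints F).filter (z < ·)).Nonempty :=
      ⟨s, Finset.mem_filter.mpr ⟨hs, hzs⟩⟩
    obtain ⟨hv, hzv⟩ := Finset.mem_filter.mp (Finset.min'_mem _ habove)
    set v := ((crossingPoints F).filter (z < ·)).min' habove
    obtain ⟨q, hq, hline⟩ := exists_minAffine_eq_on_Icc hF (mem_Icc_of_mem_crossingPoints hz).1
      (mem_Icc_of_mem_crossingPoints hv).2 fun w hw ⟨hzw, hwv⟩ =>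
        hwv.not_ge (Finset.min'_le _ w (Finset.mem_filter.mpr ⟨hw, hzw⟩))
    have hqz := hline z ⟨le_rfl, hzv.le⟩
    have hqv := hline v ⟨hzv.le, le_rfl⟩
    have hslope : q.1 ≤ μ₀ := by
      by_contra! hμ₀
      have hslope₁ : μ₁ ≤ q.1 := not_lt.mp fun h => hgap q hq ⟨hμ₀, h⟩
      have hvmax : v ∈ argmaxSet F hF μ₁ := mem_argmaxSet hF hv (by nlinarith)
      exact hzv.not_ge (Finset.le_max' _ _ hvmax)
    nlinarith [minAffine_le hF hq s]

lemma concaveConj_le_of_convexComb {a b : ℝ} (ha : 0 ≤ a) (hb : 0 ≤ b) (hab : a + b = 1) :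
    concaveConj F hF μ ≤ minAffine F hF (a * argmaxLow F hF μ + b * argmaxHigh F hF μ) -
      μ * (a * argmaxLow F hF μ + b * argmaxHigh F hF μ) := by
  have hlo := (Finset.mem_filter.mp (argmaxLow_mem hF (μ := μ))).2
  have hhi := (Finset.mem_filter.mp (argmaxHigh_mem hF (μ := μ))).2
  have hconc := (concaveOn_minAffine hF).2 (mem_univ (argmaxLow F hF μ))
    (mem_univ (argmaxHigh F hF μ)) ha hb hab
  simp only [smul_eq_mul] at hconc
  linear_combination hconc - a * hlo - b * hhi - concaveConj F hF μ * hab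

end concaveConj

lemma exists_mem_lo_le_le_hi (L : Finset ℝ) (hL : L.Nonempty) (lo hi : ℝ → ℝ) {y : ℝ}
    (hmin : y ≤ hi (L.min' hL)) (hmax : lo (L.max' hL) ≤ y)
    (hstep : ∀ μ₀ ∈ L, ∀ μ₁ ∈ L, μ₀ < μ₁ → (∀ μ ∈ L, μ ∉ Ioo μ₀ μ₁) → lo μ₀ ≤ hi μ₁) :
    ∃ μ ∈ L, lo μ ≤ y ∧ y ≤ hi μ := by
  have hT : (L.filter (y ≤ hi ·)).Nonempty := ⟨_, Finset.mem_filter.mpr ⟨L.min'_mem hL, hmin⟩⟩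
  set μ₀ := (L.filter (y ≤ hi ·)).max' hT
  obtain ⟨hμ₀, hyμ₀⟩ := Finset.mem_filter.mp (Finset.max'_mem _ hT)
  refine ⟨μ₀, hμ₀, ?_, hyμ₀⟩
  rcases (L.filter (μ₀ < ·)).eq_empty_or_nonempty with hempty | habove
  · have : L.max' hL = μ₀ := le_antisymm (L.max'_le hL _ fun μ hμ => not_lt.mp fun h =>
      (Finset.filter_eq_empty_iff.mp hempty) hμ h) (L.le_max' _ hμ₀)
    rwa [← this]
  · obtain ⟨hμ₁, hlt⟩ := Finset.mem_filter.mp (Finset.min'_mem _ habove)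
    have hnext := hstep μ₀ hμ₀ _ hμ₁ hlt fun μ hμ ⟨h₀, h₁⟩ =>
      h₁.not_ge (Finset.min'_le _ μ (Finset.mem_filter.mpr ⟨hμ, h₀⟩))
    have hy : ¬ y ≤ hi ((L.filter (μ₀ < ·)).min' habove) := fun h =>
      hlt.not_ge (Finset.le_max' _ _ (Finset.mem_filter.mpr ⟨hμ₁, h⟩))
    linarith

noncomputable def allSlopes {ι : Type*} [Fintype ι] (F : ι → Finset (ℝ × ℝ)) : Finset ℝ :=
  Finset.univ.biUnion fun i => (F i).image Prod.fst

section duality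

variable {ι : Type*} [Fintype ι] {p : ι → ℝ} {F : ι → Finset (ℝ × ℝ)} (hF : ∀ i, (F i).Nonempty)

lemma mem_allSlopes {i : ι} {q : ℝ × ℝ} (hq : q ∈ F i) : q.1 ∈ allSlopes F :=
  Finset.mem_biUnion.mpr ⟨i, Finset.mem_univ i, Finset.mem_image_of_mem _ hq⟩

lemma sum_minAffine_le_dual (hp0 : ∀ i, 0 ≤ p i) {z : ι → ℝ} (hz : ∀ i, z i ∈ Icc 0 1) (μ : ℝ) :
    ∑ i, minAffine (F i) (hF i) (z i) * p i ≤
      μ * ∑ i, z i * p i + ∑ i, concaveConj (F i) (hF i) μ * p i := by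
  rw [Finset.mul_sum, ← Finset.sum_add_distrib]
  gcongr with i
  nlinarith [sub_le_concaveConj (hF i) (μ := μ) (hz i), hp0 i]

/-- Strong duality: a multiplier `μ` whose two extreme aggregated maximisers bracket `y` exists
by `exists_mem_lo_le_le_hi`, and interpolating between them gives an optimal `z`. -/
lemma exists_dual_le_sum_minAffine (hp0 : ∀ i, 0 ≤ p i) (hp1 : ∑ i, p i = 1)
    (hL : (allSlopes F).Nonempty) {y : ℝ} (hy : y ∈ Icc 0 1) :
    ∃ μ ∈ allSlopes F, ∃ z : ι → ℝ, (∀ i, z i ∈ Icc 0 1) ∧ ∑ i, z i * p i = y ∧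
      μ * y + ∑ i, concaveConj (F i) (hF i) μ * p i ≤ ∑ i, minAffine (F i) (hF i) (z i) * p i := by
  set lo : ℝ → ℝ := fun μ => ∑ i, argmaxLow (F i) (hF i) μ * p i
  set hi : ℝ → ℝ := fun μ => ∑ i, argmaxHigh (F i) (hF i) μ * p i
  have hmin : y ≤ hi ((allSlopes F).min' hL) := by
    have h1 i : argmaxHigh (F i) (hF i) ((allSlopes F).min' hL) = 1 :=
      argmaxHigh_eq_one (hF i) fun q hq => Finset.min'_le _ _ (mem_allSlopes hq)
    simpa only [hi, h1, one_mul, hp1] using hy.2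
  have hmax : lo ((allSlopes F).max' hL) ≤ y := by
    have h0 i : argmaxLow (F i) (hF i) ((allSlopes F).max' hL) = 0 :=
      argmaxLow_eq_zero (hF i) fun q hq => Finset.le_max' _ _ (mem_allSlopes hq)
    simpa only [lo, h0, zero_mul, Finset.sum_const_zero] using hy.1
  obtain ⟨μ, hμ, hloy, hyhi⟩ := exists_mem_lo_le_le_hi _ hL lo hi hmin hmax
    fun μ₀ _ μ₁ _ hlt hgap => Finset.sum_le_sum fun i _ => mul_le_mul_of_nonneg_right
      (argmaxLow_le_argmaxHigh (hF i) hlt.le fun q hq => hgap _ (mem_allSlopes hq)) (hp0 i)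
  obtain ⟨a, b, ha, hb, hab, hyab⟩ : y ∈ segment ℝ (lo μ) (hi μ) := by
    rw [segment_eq_Icc (hloy.trans hyhi)]; exact ⟨hloy, hyhi⟩
  refine ⟨μ, hμ, fun i => a * argmaxLow (F i) (hF i) μ + b * argmaxHigh (F i) (hF i) μ,
    fun i => ?_, ?_, ?_⟩
  · have hlo := Finset.mem_filter.mp (argmaxLow_mem (hF i) (μ := μ))
    have hhi := Finset.mem_filter.mp (argmaxHigh_mem (hF i) (μ := μ))
    exact convex_Icc 0 1 (mem_Icc_of_mem_crossingPoints hlo.1)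
      (mem_Icc_of_mem_crossingPoints hhi.1) ha hb hab
  · rw [← hyab]
    simp only [lo, hi, smul_eq_mul, Finset.mul_sum, ← Finset.sum_add_distrib]
    exact Finset.sum_congr rfl fun i _ => by ring
  · rw [← hyab]
    simp only [lo, hi, smul_eq_mul, Finset.mul_sum, ← Finset.sum_add_distrib]
    gcongr with i
    nlinarith [concaveConj_le_of_convexComb (hF i) (μ := μ) ha hb hab, hp0 i]

end duality

def meanConstrainedValues {ι : Type*} [Fintype ι] (p : ι → ℝ) (g : ι → ℝ → ℝ) (y : ℝ) :
    Set ℝ :=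
  {r | ∃ z : ι → ℝ, (∀ i, z i ∈ Icc 0 1) ∧ ∑ i, z i * p i = y ∧ r = ∑ i, g i (z i) * p i}

def IsMinAffineOn01 (S : Set ℝ) (f : ℝ → ℝ) : Prop :=
  ∃ (F : Finset (ℝ × ℝ)) (hF : F.Nonempty), (∀ q ∈ F, q.1 ∈ S) ∧
    ∀ t ∈ Icc 0 1, f t = minAffine F hF t

namespace IsMinAffineOn01

variable {S : Set ℝ} {f g : ℝ → ℝ}

lemma congr (hf : IsMinAffineOn01 S f) (hfg : ∀ t ∈ Icc 0 1, f t = g t) :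
    IsMinAffineOn01 S g :=
  let ⟨F, hF, hFS, hfF⟩ := hf
  ⟨F, hF, hFS, fun t ht => (hfg t ht).symm.trans (hfF t ht)⟩

lemma mul_const {v : ℝ} (hv : v ∈ S) : IsMinAffineOn01 S fun t => t * v :=
  ⟨{(v, 0)}, Finset.singleton_nonempty _, by simpa using hv,
    fun t _ => by simp [minAffine, mul_comm]⟩

lemma mul_const_add_const_mul (hf : IsMinAffineOn01 (Ici 0) f) {a β : ℝ} (ha : 0 ≤ a)
    (hβ : 0 ≤ β) : IsMinAffineOn01 (Ici 0) fun t => t * a + β * f t := by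
  obtain ⟨F, hF, hFS, hfF⟩ := hf
  refine ⟨F.image fun q => (a + β * q.1, β * q.2), hF.image _, ?_, fun t ht => ?_⟩
  · simp only [Finset.mem_image, mem_Ici]
    rintro _ ⟨q, hq, rfl⟩
    have : 0 ≤ q.1 := hFS q hq
    positivity
  · have hmono : Monotone fun s : ℝ => t * a + β * s := fun _ _ h =>
      add_le_add_right (mul_le_mul_of_nonneg_left h hβ) _
    dsimp only
    rw [hfF t ht, minAffine, minAffine, Finset.inf'_image]
    refine (map_finset_inf' (OrderHom.mk _ hmono) hF _).trans (Finset.inf'_congr _ rfl ?_)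
    intro q _
    simp only [OrderHom.coe_mk, Function.comp_apply]
    ring

lemma inf (hf : IsMinAffineOn01 S f) (hg : IsMinAffineOn01 S g) :
    IsMinAffineOn01 S fun t => f t ⊓ g t := by
  obtain ⟨F, hF, hFS, hfF⟩ := hf
  obtain ⟨G, hG, hGS, hgG⟩ := hg
  refine ⟨F ∪ G, hF.mono Finset.subset_union_left, fun q hq => ?_, fun t ht => ?_⟩
  · rcases Finset.mem_union.mp hq with hq | hq
    exacts [hFS q hq, hGS q hq]
  · dsimp only
    rw [hfF t ht, hgG t ht, minAffine, minAffine, minAffine, Finset.inf'_union]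

lemma finset_inf' {A : Type*} {s : Finset A} (hs : s.Nonempty) {f : A → ℝ → ℝ}
    (hf : ∀ a ∈ s, IsMinAffineOn01 S (f a)) :
    IsMinAffineOn01 S fun t => s.inf' hs fun a => f a t := by
  induction hs using Finset.Nonempty.cons_induction with
  | singleton a => simpa using hf a (Finset.mem_singleton_self a)
  | cons a s ha hs ih =>
    simp only [Finset.inf'_cons hs]
    exact (hf a (Finset.mem_cons_self a s)).inf
      (ih fun b hb => hf b (Finset.mem_cons_of_mem hb))

lemma sSup_meanConstrainedValues {ι : Type*} [Fintype ι] {p : ι → ℝ} (hp0 : ∀ i, 0 ≤ p i)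
    (hp1 : ∑ i, p i = 1) {g : ι → ℝ → ℝ} (hg : ∀ i, IsMinAffineOn01 S (g i)) :
    IsMinAffineOn01 S fun y => sSup (meanConstrainedValues p g y) := by
  choose F hF hFS hgF using hg
  obtain ⟨i₀⟩ : Nonempty ι := by
    by_contra h
    simp [not_nonempty_iff.mp h] at hp1
  obtain ⟨q₀, hq₀⟩ := hF i₀
  have hL : (allSlopes F).Nonempty := ⟨_, mem_allSlopes hq₀⟩
  set Φ : ℝ → ℝ := fun μ => ∑ i, concaveConj (F i) (hF i) μ * p i
  refine ⟨(allSlopes F).image fun μ => (μ, Φ μ), hL.image _, ?_, fun y hy => ?_⟩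
  · simp only [Finset.mem_image]
    rintro _ ⟨μ, hμ, rfl⟩
    obtain ⟨i, -, hi⟩ := Finset.mem_biUnion.mp hμ
    obtain ⟨q, hq, rfl⟩ := Finset.mem_image.mp hi
    exact hFS i q hq
  have hvalue : ∀ z : ι → ℝ, (∀ i, z i ∈ Icc 0 1) →
      ∑ i, g i (z i) * p i = ∑ i, minAffine (F i) (hF i) (z i) * p i := fun z hz =>
    Finset.sum_congr rfl fun i _ => by rw [hgF i (z i) (hz i)]
  have hweak : ∀ r ∈ meanConstrainedValues p g y, ∀ μ, r ≤ μ * y + Φ μ := by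
    rintro _ ⟨z, hz, rfl, rfl⟩ μ
    rw [hvalue z hz]
    exact sum_minAffine_le_dual hF hp0 hz μ
  obtain ⟨μ, hμ, z, hz, hzy, hdual⟩ := exists_dual_le_sum_minAffine hF hp0 hp1 hL hy
  have hzmem : ∑ i, g i (z i) * p i ∈ meanConstrainedValues p g y := ⟨z, hz, hzy, rfl⟩
  rw [minAffine, Finset.inf'_image]
  refine le_antisymm (csSup_le ⟨_, hzmem⟩ fun r hr => Finset.le_inf' _ _ fun μ _ => hweak r hr μ)
    ?_
  calc (allSlopes F).inf' hL ((fun q : ℝ × ℝ => q.1 * y + q.2) ∘ fun μ => (μ, Φ μ))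
      ≤ μ * y + Φ μ := Finset.inf'_le _ hμ
    _ ≤ ∑ i, g i (z i) * p i := by rw [hvalue z hz]; exact hdual
    _ ≤ _ := le_csSup ⟨_, fun r hr => hweak r hr μ⟩ hzmem

lemma continuousOn (hf : IsMinAffineOn01 S f) : ContinuousOn f (Icc 0 1) :=
  let ⟨_, hF, _, hfF⟩ := hf
  (continuous_minAffine hF).continuousOn.congr hfF

lemma concaveOn (hf : IsMinAffineOn01 S f) : ConcaveOn ℝ (Icc 0 1) f :=
  let ⟨_, hF, _, hfF⟩ := hf
  ((concaveOn_minAffine hF).subset (subset_univ _) (convex_Icc 0 1)).congr fun t ht =>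
    (hfF t ht).symm

lemma monotoneOn (hf : IsMinAffineOn01 (Ici 0) f) : MonotoneOn f (Icc 0 1) := by
  obtain ⟨F, hF, hFS, hfF⟩ := hf
  intro s hs t ht hst
  simpa [hfF s hs, hfF t ht] using monotone_minAffine_sub hF (μ := 0) (fun q hq => hFS q hq) hst

lemma isPiecewiseLinearOn01 (hf : IsMinAffineOn01 S f) : IsPiecewiseLinearOn01 f :=
  let ⟨_, hF, _, hfF⟩ := hf
  isPiecewiseLinearOn01_of_eq_minAffine hF hfF

end IsMinAffineOn01

/-- The substitution `z = y • b`; for `y = 0` the weight `b` is taken to be the indicator of the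
support of `p`. -/
lemma setOf_cvar_eq {ι : Type*} [Fintype ι] {p : ι → ℝ} (hp0 : ∀ i, 0 ≤ p i)
    (hp1 : ∑ i, p i = 1) (g : ι → ℝ → ℝ) (y : ℝ) :
    {r : ℝ | ∃ b : ι → ℝ, (∀ i, (0 ≤ y * b i ∧ y * b i ≤ 1) ∧ (p i = 0 → b i = 0)) ∧
      ∑ i, b i * p i = 1 ∧ r = ∑ i, g i (y * b i) * p i} = meanConstrainedValues p g y := by
  ext r
  constructor
  · rintro ⟨b, hb, hb1, rfl⟩
    refine ⟨fun i => y * b i, fun i => (hb i).1, ?_, rfl⟩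
    simp only [mul_assoc, ← Finset.mul_sum, hb1, mul_one]
  · rintro ⟨z, hz, hzy, rfl⟩
    set b : ι → ℝ := fun i => if p i = 0 then 0 else if y = 0 then 1 else z i / y
    have hyb : ∀ i, p i ≠ 0 → y * b i = z i := by
      intro i hpi
      by_cases hy : y = 0
      · have hzp : z i * p i = 0 := (Finset.sum_eq_zero_iff_of_nonneg fun j _ =>
          mul_nonneg (hz j).1 (hp0 j)).mp (hzy.trans hy) i (Finset.mem_univ i)
        simp [hy, (mul_eq_zero.mp hzp).resolve_right hpi]
      · simp [b, hpi, hy, mul_div_cancel₀]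
    have hterm : ∀ (h : ℝ → ℝ) i, h (y * b i) * p i = h (z i) * p i := fun h i => by
      by_cases hpi : p i = 0
      · simp [hpi]
      · rw [hyb i hpi]
    refine ⟨b, fun i => ⟨?_, fun hpi => if_pos hpi⟩, ?_,
      Finset.sum_congr rfl fun i _ => (hterm (g i) i).symm⟩
    · by_cases hpi : p i = 0
      · simp [b, hpi]
      · rw [hyb i hpi]; exact hz i
    · by_cases hy : y = 0
      · rw [← hp1]
        exact Finset.sum_congr rfl fun i _ => by by_cases hpi : p i = 0 <;> simp [b, hpi, hy]
      · apply mul_left_cancel₀ hy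
        rw [mul_one, Finset.mul_sum]
        conv_rhs => rw [← hzy]
        exact Finset.sum_congr rfl fun i _ => by rw [← mul_assoc]; exact hterm id i

theorem value_functions_concave_piecewise_linear_general {X A : Type*} [Fintype X]
    (Act : X → Finset A) (hA : ∀ x, (Act x).Nonempty)
    (c : X → A → X → ℝ) (hc : ∀ x a x', 0 ≤ c x a x')
    (p : X → A → X → ℝ) (hp0 : ∀ x a x', 0 ≤ p x a x')
    (hp1 : ∀ x, ∀ a ∈ Act x, (∑ x', p x a x') = 1)
    (β : ℝ) (hβ : β ∈ Set.Icc (0 : ℝ) 1)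
    (v0 : X → ℝ) (hv0 : ∀ x, 0 ≤ v0 x)
    (V : ℕ → X → ℝ → ℝ)
    (hV0 : ∀ x y, V 0 x y = y * v0 x)
    (hVrec : ∀ N : ℕ, ∀ x : X, ∀ y ∈ Set.Icc (0 : ℝ) 1,
      V (N + 1) x y = (Act x).inf' (hA x) fun a => sSup {r : ℝ | ∃ b : X → ℝ,
        (∀ x', (0 ≤ y * b x' ∧ y * b x' ≤ 1) ∧ (p x a x' = 0 → b x' = 0)) ∧
        (∑ x', b x' * p x a x') = 1 ∧
        r = ∑ x', (y * b x' * c x a x' + β * V N x' (y * b x')) * p x a x'}) :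
    ∀ N x, ContinuousOn (V N x) (Set.Icc 0 1) ∧ ConcaveOn ℝ (Set.Icc 0 1) (V N x) ∧
      MonotoneOn (V N x) (Set.Icc 0 1) ∧ IsPiecewiseLinearOn01 (V N x) := by
  have hV : ∀ N x, IsMinAffineOn01 (Ici 0) (V N x) := by
    intro N
    induction N with
    | zero => exact fun x => (IsMinAffineOn01.mul_const (hv0 x)).congr fun y _ => (hV0 x y).symm
    | succ N ih =>
      intro x
      refine (IsMinAffineOn01.finset_inf' (hA x) fun a ha => ?_).congr
        fun y hy => (hVrec N x y hy).symm
      refine (IsMinAffineOn01.sSup_meanConstrainedValues (hp0 x a) (hp1 x a ha) fun x' =>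
        (ih x').mul_const_add_const_mul (hc x a x') hβ.1).congr fun y _ => ?_
      exact congrArg sSup (setOf_cvar_eq (hp0 x a) (hp1 x a ha)
        (fun x' t => t * c x a x' + β * V N x' t) y).symm
  exact fun N x => ⟨(hV N x).continuousOn, (hV N x).concaveOn, (hV N x).monotoneOn,
    (hV N x).isPiecewiseLinearOn01⟩

/-- The value functions of the scaled-CVaR robust MDP, defined recursively by
`V_0(x,y) = y v_0(x)` and
`V_{N+1}(x,y) = min_{a ∈ A(x)} max_{b ∈ B(x,y,a)} Σ_{x'} (y b_{x'} c(x,a,x') + β V_N(x', y b_{x'})) p(x'|x,a)`,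
are continuous, concave, nondecreasing, and piecewise linear in `y ∈ [0,1]` for every
horizon `N` and every state `x`. -/
theorem value_functions_concave_piecewise_linear {X A : Type*} [Fintype X] [Nonempty X]
    (Act : X → Finset A) (hA : ∀ x, (Act x).Nonempty)
    (c : X → A → X → ℝ) (hc : ∀ x a x', 0 ≤ c x a x')
    (p : X → A → X → ℝ) (hp0 : ∀ x a x', 0 ≤ p x a x')
    (hp1 : ∀ x, ∀ a ∈ Act x, (∑ x', p x a x') = 1)
    (β : ℝ) (hβ : β ∈ Set.Icc (0 : ℝ) 1)
    (v0 : X → ℝ) (hv0 : ∀ x, 0 ≤ v0 x)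
    (V : ℕ → X → ℝ → ℝ)
    (hV0 : ∀ x y, V 0 x y = y * v0 x)
    (hVrec : ∀ N : ℕ, ∀ x : X, ∀ y ∈ Set.Icc (0 : ℝ) 1,
      V (N + 1) x y = (Act x).inf' (hA x) fun a => sSup {r : ℝ | ∃ b : X → ℝ,
        (∀ x', (0 ≤ y * b x' ∧ y * b x' ≤ 1) ∧ (p x a x' = 0 → b x' = 0)) ∧
        (∑ x', b x' * p x a x') = 1 ∧
        r = ∑ x', (y * b x' * c x a x' + β * V N x' (y * b x')) * p x a x'}) :
    ∀ N x, ContinuousOn (V N x) (Set.Icc 0 1) ∧ ConcaveOn ℝ (Set.Icc 0 1) (V N x) ∧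
      MonotoneOn (V N x) (Set.Icc 0 1) ∧ IsPiecewiseLinearOn01 (V N x) :=
  value_functions_concave_piecewise_linear_general Act hA c hc p hp0 hp1 β hβ v0 hv0 V hV0 hVrec
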